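/- Let G be a finite connected simple graph on n vertices with Laplacian L and Moore–Penrose pseudoinverse L†, and let L̃ be the Laplacian of the bunkbed graph G̃, which in block form (indexing V×{1,2} by the two copies of V) equals [[L+I, −I], [−I, L+I]]. Then L+2I is invertible, and the 2n×2n matrix M = ½·[[L† + (L+2I)⁻¹, L† − (L+2I)⁻¹], [L† − (L+2I)⁻¹, L† + (L+2I)⁻¹]] is the Moore–Penrose pseudoinverse of L̃; that is, M is symmetric and satisfies L̃·M = M·L̃ = I_{2n} − (1/(2n))·J_{2n} and M·J_{2n} = 0, where I_{2n} is the identity and J_{2n} the all-ones 2n×2n matrix. -/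

import Mathlib

open Finset Matrix

open scoped Classical

noncomputable section

/-- The number of connected components of the spanning subgraph `(V, S)` determined by
a set `S` of edges. -/
def kappa (V : Type*) (S : Finset (Sym2 V)) : ℕ :=
  Nat.card (SimpleGraph.fromEdgeSet (↑S : Set (Sym2 V))).ConnectedComponent

/-- Vertices `a` and `b` lie in the same connected component of the spanning subgraph
`(V, S)`. -/
def EConn {V : Type*} (S : Finset (Sym2 V)) (a b : V) : Prop :=
  (SimpleGraph.fromEdgeSet (↑S : Set (Sym2 V))).Reachable a b

/-- The random-cluster weight `p^|S| (1-p)^(m-|S|) q^{κ(S)}` of an edge subset `S`. -/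
def rcWeight {V : Type*} [Fintype V] (G : SimpleGraph V) (p q : ℝ)
    (S : Finset (Sym2 V)) : ℝ :=
  p ^ S.card * (1 - p) ^ (G.edgeFinset.card - S.card) * q ^ kappa V S

/-- The random-cluster probability of the event `X`, conditioned on all edges of `R`
being present. -/
def rcCondProb {V : Type*} [Fintype V] (G : SimpleGraph V) (p q : ℝ)
    (R : Finset (Sym2 V)) (X : Finset (Sym2 V) → Prop) : ℝ :=
  (∑ S ∈ G.edgeFinset.powerset, if R ⊆ S ∧ X S then rcWeight G p q S else 0) /
    (∑ S ∈ G.edgeFinset.powerset, if R ⊆ S then rcWeight G p q S else 0)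

/-- The random-cluster probability of the event `X`. -/
def rcProb {V : Type*} [Fintype V] (G : SimpleGraph V) (p q : ℝ)
    (X : Finset (Sym2 V) → Prop) : ℝ :=
  rcCondProb G p q ∅ X

/-- The edge set `S` spans a forest (the spanning subgraph `(V, S)` is acyclic). -/
def IsForest {V : Type*} (S : Finset (Sym2 V)) : Prop :=
  (SimpleGraph.fromEdgeSet (↑S : Set (Sym2 V))).IsAcyclic

/-- The arboreal-gas probability of the event `X`, conditioned on all edges of `R`
being present: each spanning forest `F` has probability proportional to `λ^|F|`. -/
def agCondProb {V : Type*} [Fintype V] (G : SimpleGraph V) (lam : ℝ)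
    (R : Finset (Sym2 V)) (X : Finset (Sym2 V) → Prop) : ℝ :=
  (∑ S ∈ G.edgeFinset.powerset, if IsForest S ∧ R ⊆ S ∧ X S then lam ^ S.card else 0) /
    (∑ S ∈ G.edgeFinset.powerset, if IsForest S ∧ R ⊆ S then lam ^ S.card else 0)

/-- The arboreal-gas probability of the event `X`. -/
def agProb {V : Type*} [Fintype V] (G : SimpleGraph V) (lam : ℝ)
    (X : Finset (Sym2 V) → Prop) : ℝ :=
  agCondProb G lam ∅ X

/-- The bunkbed graph of `G`: two copies of `G` joined by all vertical edges. -/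
def bunkbed {V : Type*} (G : SimpleGraph V) : SimpleGraph (V × Fin 2) where
  Adj x y := (x.1 = y.1 ∧ x.2 ≠ y.2) ∨ (G.Adj x.1 y.1 ∧ x.2 = y.2)
  symm := by
    constructor
    rintro ⟨a, i⟩ ⟨b, j⟩ (⟨h1, h2⟩ | ⟨h1, h2⟩)
    · exact Or.inl ⟨h1.symm, h2.symm⟩
    · exact Or.inr ⟨G.symm.symm _ _ h1, h2.symm⟩
  loopless := by
    constructor
    rintro ⟨a, i⟩ (⟨_, h⟩ | ⟨h, _⟩)
    · exact h rfl
    · exact G.loopless.irrefl a h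

/-- The bunkbed graph of `G` with posts `T`: two copies of `G` joined by the vertical
edges at the vertices of `T`. -/
def bunkbedPosts {V : Type*} (G : SimpleGraph V) (T : Finset V) :
    SimpleGraph (V × Fin 2) where
  Adj x y := (x.1 = y.1 ∧ x.1 ∈ T ∧ x.2 ≠ y.2) ∨ (G.Adj x.1 y.1 ∧ x.2 = y.2)
  symm := by
    constructor
    rintro ⟨a, i⟩ ⟨b, j⟩ (⟨h1, hT, h2⟩ | ⟨h1, h2⟩)
    · exact Or.inl ⟨h1.symm, h1 ▸ hT, h2.symm⟩
    · exact Or.inr ⟨G.symm.symm _ _ h1, h2.symm⟩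
  loopless := by
    constructor
    rintro ⟨a, i⟩ (⟨_, _, h⟩ | ⟨h, _⟩)
    · exact h rfl
    · exact G.loopless.irrefl a h

/-- The vertical (post) edges of the bunkbed graph with posts `T`. -/
def postEdges {V : Type*} (T : Finset V) : Finset (Sym2 (V × Fin 2)) :=
  T.image (fun t => s((t, (0 : Fin 2)), (t, (1 : Fin 2))))

/-- `[·]`: the number of spanning trees of `G`. -/
def treeCount {V : Type*} [Fintype V] (G : SimpleGraph V) : ℕ :=
  (G.edgeFinset.powerset.filter fun S => IsForest S ∧ kappa V S = 1).card

/-- `[a | b]`: the number of spanning forests of `G` with exactly two connected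
components in which `a` and `b` lie in different components. -/
def sepCount {V : Type*} [Fintype V] (G : SimpleGraph V) (a b : V) : ℕ :=
  (G.edgeFinset.powerset.filter fun S =>
    IsForest S ∧ kappa V S = 2 ∧ ¬ EConn S a b).card

/-- `[a c | b d]`: the number of spanning forests of `G` with exactly two connected
components in which `a, c` lie in one component and `b, d` lie in the other. -/
def sepCount4 {V : Type*} [Fintype V] (G : SimpleGraph V) (a c b d : V) : ℕ :=
  (G.edgeFinset.powerset.filter fun S =>
    IsForest S ∧ kappa V S = 2 ∧ EConn S a c ∧ EConn S b d ∧ ¬ EConn S a b).card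

/-- A finite graph is outerplanar if its vertices can be enumerated so that no two
edges cross. -/
def IsOuterplanar {V : Type*} [Fintype V] (G : SimpleGraph V) : Prop :=
  ∃ e : Fin (Fintype.card V) ≃ V, ∀ i j k l : Fin (Fintype.card V),
    i < j → j < k → k < l → ¬ (G.Adj (e i) (e k) ∧ G.Adj (e j) (e l))

/-!
Split `ℝ^V ⊕ ℝ^V` into the vectors `(u, u)` and `(u, -u)`. On the first summand the bunkbed
Laplacian `L̃` acts as `L`, on the second as `L + 2I`, which is positive definite; the candidate
`M` acts as `L†` and as `(L + 2I)⁻¹` respectively. Block matrices of this shape multiply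
componentwise, so `L̃ M` and `M L̃` act as `L L† = I - J/n` and as `I`, which is exactly
`I - J/(2n)`, and `M J = 0` because `J` lives on the first summand, where `L† J = 0`.
-/

namespace Matrix

variable {m K : Type*} [Field K]

/-- The block matrix acting as `X` on the vectors `(u, u)` and as `Y` on the vectors `(u, -u)`. -/
def evenOddBlocks (X Y : Matrix m m K) : Matrix (m ⊕ m) (m ⊕ m) K :=
  (1 / 2 : K) • fromBlocks (X + Y) (X - Y) (X - Y) (X + Y)

theorem evenOddBlocks_zero_zero : evenOddBlocks (0 : Matrix m m K) 0 = 0 := by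
  simp [evenOddBlocks]

theorem evenOddBlocks_transpose (X Y : Matrix m m K) :
    (evenOddBlocks X Y)ᵀ = evenOddBlocks Xᵀ Yᵀ := by
  simp [evenOddBlocks, fromBlocks_transpose]

theorem IsSymm.evenOddBlocks {X Y : Matrix m m K} (hX : X.IsSymm) (hY : Y.IsSymm) :
    (evenOddBlocks X Y).IsSymm := by
  rw [IsSymm, evenOddBlocks_transpose, hX.eq, hY.eq]

theorem evenOddBlocks_mul_evenOddBlocks [Fintype m] [NeZero (2 : K)] (X Y X' Y' : Matrix m m K) :
    evenOddBlocks X Y * evenOddBlocks X' Y' = evenOddBlocks (X * X') (Y * Y') := by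
  simp only [evenOddBlocks, smul_mul, Matrix.mul_smul, fromBlocks_multiply, fromBlocks_smul,
    fromBlocks_inj, add_mul, mul_add, sub_mul, mul_sub]
  refine ⟨?_, ?_, ?_, ?_⟩ <;> match_scalars <;> field_simp <;> ring

theorem fromBlocks_add_one_neg_one [DecidableEq m] [NeZero (2 : K)] (L : Matrix m m K) :
    fromBlocks (L + 1) (-1) (-1) (L + 1) = evenOddBlocks L (L + 2) := by
  simp only [evenOddBlocks, fromBlocks_smul, fromBlocks_inj]
  rw [← one_add_one_eq_two (R := Matrix m m K)]
  refine ⟨?_, ?_, ?_, ?_⟩ <;> match_scalars <;> field_simp <;> ring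

theorem evenOddBlocks_sub_smul_of_one_one [DecidableEq m] [NeZero (2 : K)] (c : K) :
    evenOddBlocks (1 - c • of fun _ _ => 1) 1 =
      1 - (c / 2) • of fun _ _ : m ⊕ m => (1 : K) := by
  ext (i | i) (j | j) <;> by_cases h : i = j <;> simp [evenOddBlocks, h] <;> field_simp <;> ring

theorem evenOddBlocks_two_smul_of_one_zero [NeZero (2 : K)] :
    evenOddBlocks ((2 : K) • of fun _ _ => 1) 0 = of fun _ _ : m ⊕ m => (1 : K) := by
  ext (i | i) (j | j) <;> simp [evenOddBlocks, two_ne_zero]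

end Matrix

section Bunkbed

variable {V : Type*} (G : SimpleGraph V)

@[simp]
theorem bunkbed_adj {v w : V} {i j : Fin 2} :
    (bunkbed G).Adj (v, i) (w, j) ↔ v = w ∧ i ≠ j ∨ G.Adj v w ∧ i = j :=
  Iff.rfl

variable [Fintype V] [DecidableRel G.Adj]

theorem neighborFinset_bunkbed (v : V) (i : Fin 2) :
    (bunkbed G).neighborFinset (v, i) =
      insert (v, i + 1) ((G.neighborFinset v).map (.sectL V i)) := by
  have hne : ∀ j : Fin 2, i ≠ j ↔ j = i + 1 := by revert i; decide
  ext ⟨w, j⟩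
  rw [SimpleGraph.mem_neighborFinset]
  simp only [bunkbed_adj, mem_insert, mem_map, Function.Embedding.sectL_apply, Prod.mk.injEq, hne]
  aesop

theorem degree_bunkbed (v : V) (i : Fin 2) :
    (bunkbed G).degree (v, i) = G.degree v + 1 := by
  rw [← SimpleGraph.card_neighborFinset_eq_degree, neighborFinset_bunkbed, card_insert_of_notMem,
    card_map, SimpleGraph.card_neighborFinset_eq_degree]
  simp

theorem lapMatrix_bunkbed_submatrix (R : Type*) [Ring R] [DecidableEq V] :
    ((bunkbed G).lapMatrix R).submatrix
        (Sum.elim (fun w : V => (w, (0 : Fin 2))) (fun w : V => (w, (1 : Fin 2))))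
        (Sum.elim (fun w : V => (w, (0 : Fin 2))) (fun w : V => (w, (1 : Fin 2)))) =
      fromBlocks (G.lapMatrix R + 1) (-1) (-1) (G.lapMatrix R + 1) := by
  ext (v | v) (w | w) <;> by_cases h : v = w <;>
    simp [SimpleGraph.lapMatrix, SimpleGraph.degMatrix, SimpleGraph.adjMatrix_apply, one_apply,
      degree_bunkbed, h]

theorem posDef_lapMatrix_add_two [DecidableEq V] : (G.lapMatrix ℝ + 2).PosDef :=
  PosDef.posSemidef_add (G.posSemidef_lapMatrix ℝ) (.ofNat 2)

end Bunkbed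

theorem bunkbed_lap_pseudoinverse_general {V : Type*} [Fintype V] [DecidableEq V]
    (G : SimpleGraph V) [DecidableRel G.Adj]
    (Ldag : Matrix V V ℝ) (hsym : Ldag.IsSymm)
    (h₁ : G.lapMatrix ℝ * Ldag =
      1 - ((Fintype.card V : ℝ))⁻¹ • (Matrix.of fun _ _ => (1 : ℝ)))
    (h₂ : Ldag * G.lapMatrix ℝ =
      1 - ((Fintype.card V : ℝ))⁻¹ • (Matrix.of fun _ _ => (1 : ℝ)))
    (h₃ : Ldag * (Matrix.of fun _ _ => (1 : ℝ)) = 0) :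
    -- the Laplacian of the bunkbed graph has the stated block form
    ((bunkbed G).lapMatrix ℝ).submatrix
        (Sum.elim (fun w : V => (w, (0 : Fin 2))) (fun w : V => (w, (1 : Fin 2))))
        (Sum.elim (fun w : V => (w, (0 : Fin 2))) (fun w : V => (w, (1 : Fin 2)))) =
      Matrix.fromBlocks (G.lapMatrix ℝ + 1) (-1) (-1) (G.lapMatrix ℝ + 1) ∧
    -- `L + 2I` is invertible
    IsUnit (G.lapMatrix ℝ + 2) ∧
    -- `M` is symmetric
    ((1 / 2 : ℝ) • Matrix.fromBlocks
        (Ldag + (G.lapMatrix ℝ + 2)⁻¹) (Ldag - (G.lapMatrix ℝ + 2)⁻¹)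
        (Ldag - (G.lapMatrix ℝ + 2)⁻¹) (Ldag + (G.lapMatrix ℝ + 2)⁻¹)).IsSymm ∧
    -- `L̃ M = I − (1/(2n)) J`
    Matrix.fromBlocks (G.lapMatrix ℝ + 1) (-1) (-1) (G.lapMatrix ℝ + 1) *
        ((1 / 2 : ℝ) • Matrix.fromBlocks
          (Ldag + (G.lapMatrix ℝ + 2)⁻¹) (Ldag - (G.lapMatrix ℝ + 2)⁻¹)
          (Ldag - (G.lapMatrix ℝ + 2)⁻¹) (Ldag + (G.lapMatrix ℝ + 2)⁻¹)) =
      1 - ((2 * Fintype.card V : ℝ))⁻¹ •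
        (Matrix.of fun _ _ : V ⊕ V => (1 : ℝ)) ∧
    -- `M L̃ = I − (1/(2n)) J`
    ((1 / 2 : ℝ) • Matrix.fromBlocks
        (Ldag + (G.lapMatrix ℝ + 2)⁻¹) (Ldag - (G.lapMatrix ℝ + 2)⁻¹)
        (Ldag - (G.lapMatrix ℝ + 2)⁻¹) (Ldag + (G.lapMatrix ℝ + 2)⁻¹)) *
        Matrix.fromBlocks (G.lapMatrix ℝ + 1) (-1) (-1) (G.lapMatrix ℝ + 1) =
      1 - ((2 * Fintype.card V : ℝ))⁻¹ •
        (Matrix.of fun _ _ : V ⊕ V => (1 : ℝ)) ∧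
    -- `M J = 0`
    ((1 / 2 : ℝ) • Matrix.fromBlocks
        (Ldag + (G.lapMatrix ℝ + 2)⁻¹) (Ldag - (G.lapMatrix ℝ + 2)⁻¹)
        (Ldag - (G.lapMatrix ℝ + 2)⁻¹) (Ldag + (G.lapMatrix ℝ + 2)⁻¹)) *
        (Matrix.of fun _ _ : V ⊕ V => (1 : ℝ)) = 0 := by
  have hpos := posDef_lapMatrix_add_two G
  have hdet : IsUnit (G.lapMatrix ℝ + 2).det := (isUnit_iff_isUnit_det _).mp hpos.isUnit
  have hM : (1 / 2 : ℝ) • fromBlocks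
      (Ldag + (G.lapMatrix ℝ + 2)⁻¹) (Ldag - (G.lapMatrix ℝ + 2)⁻¹)
      (Ldag - (G.lapMatrix ℝ + 2)⁻¹) (Ldag + (G.lapMatrix ℝ + 2)⁻¹) =
      evenOddBlocks Ldag (G.lapMatrix ℝ + 2)⁻¹ := rfl
  have hP : 1 - ((2 * Fintype.card V : ℝ))⁻¹ • (of fun _ _ : V ⊕ V => (1 : ℝ)) =
      evenOddBlocks (1 - ((Fintype.card V : ℝ))⁻¹ • (of fun _ _ => (1 : ℝ))) 1 := by
    rw [evenOddBlocks_sub_smul_of_one_one, div_eq_inv_mul, mul_inv]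
  refine ⟨lapMatrix_bunkbed_submatrix G ℝ, hpos.isUnit, ?_⟩
  rw [hM, hP, fromBlocks_add_one_neg_one]
  refine ⟨?_, ?_, ?_, ?_⟩
  · exact hsym.evenOddBlocks (isHermitian_iff_isSymm.mp hpos.isHermitian).inv
  · rw [evenOddBlocks_mul_evenOddBlocks, h₁, mul_nonsing_inv _ hdet]
  · rw [evenOddBlocks_mul_evenOddBlocks, h₂, nonsing_inv_mul _ hdet]
  · rw [← evenOddBlocks_two_smul_of_one_zero, evenOddBlocks_mul_evenOddBlocks, Matrix.mul_smul,
      h₃, smul_zero, mul_zero, evenOddBlocks_zero_zero]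

/-- the Moore–Penrose pseudoinverse of the bunkbed Laplacian
`L̃ = [[L+I, −I], [−I, L+I]]` is
`M = ½ [[L† + (L+2I)⁻¹, L† − (L+2I)⁻¹], [L† − (L+2I)⁻¹, L† + (L+2I)⁻¹]]`. -/
theorem bunkbed_lap_pseudoinverse {V : Type*} [Fintype V] [DecidableEq V]
    (G : SimpleGraph V) [DecidableRel G.Adj] (hG : G.Connected)
    (Ldag : Matrix V V ℝ) (hsym : Ldag.IsSymm)
    (h₁ : G.lapMatrix ℝ * Ldag =
      1 - ((Fintype.card V : ℝ))⁻¹ • (Matrix.of fun _ _ => (1 : ℝ)))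
    (h₂ : Ldag * G.lapMatrix ℝ =
      1 - ((Fintype.card V : ℝ))⁻¹ • (Matrix.of fun _ _ => (1 : ℝ)))
    (h₃ : Ldag * (Matrix.of fun _ _ => (1 : ℝ)) = 0) :
    -- the Laplacian of the bunkbed graph has the stated block form
    ((bunkbed G).lapMatrix ℝ).submatrix
        (Sum.elim (fun w : V => (w, (0 : Fin 2))) (fun w : V => (w, (1 : Fin 2))))
        (Sum.elim (fun w : V => (w, (0 : Fin 2))) (fun w : V => (w, (1 : Fin 2)))) =
      Matrix.fromBlocks (G.lapMatrix ℝ + 1) (-1) (-1) (G.lapMatrix ℝ + 1) ∧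
    -- `L + 2I` is invertible
    IsUnit (G.lapMatrix ℝ + 2) ∧
    -- `M` is symmetric
    ((1 / 2 : ℝ) • Matrix.fromBlocks
        (Ldag + (G.lapMatrix ℝ + 2)⁻¹) (Ldag - (G.lapMatrix ℝ + 2)⁻¹)
        (Ldag - (G.lapMatrix ℝ + 2)⁻¹) (Ldag + (G.lapMatrix ℝ + 2)⁻¹)).IsSymm ∧
    -- `L̃ M = I − (1/(2n)) J`
    Matrix.fromBlocks (G.lapMatrix ℝ + 1) (-1) (-1) (G.lapMatrix ℝ + 1) *
        ((1 / 2 : ℝ) • Matrix.fromBlocks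
          (Ldag + (G.lapMatrix ℝ + 2)⁻¹) (Ldag - (G.lapMatrix ℝ + 2)⁻¹)
          (Ldag - (G.lapMatrix ℝ + 2)⁻¹) (Ldag + (G.lapMatrix ℝ + 2)⁻¹)) =
      1 - ((2 * Fintype.card V : ℝ))⁻¹ •
        (Matrix.of fun _ _ : V ⊕ V => (1 : ℝ)) ∧
    -- `M L̃ = I − (1/(2n)) J`
    ((1 / 2 : ℝ) • Matrix.fromBlocks
        (Ldag + (G.lapMatrix ℝ + 2)⁻¹) (Ldag - (G.lapMatrix ℝ + 2)⁻¹)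
        (Ldag - (G.lapMatrix ℝ + 2)⁻¹) (Ldag + (G.lapMatrix ℝ + 2)⁻¹)) *
        Matrix.fromBlocks (G.lapMatrix ℝ + 1) (-1) (-1) (G.lapMatrix ℝ + 1) =
      1 - ((2 * Fintype.card V : ℝ))⁻¹ •
        (Matrix.of fun _ _ : V ⊕ V => (1 : ℝ)) ∧
    -- `M J = 0`
    ((1 / 2 : ℝ) • Matrix.fromBlocks
        (Ldag + (G.lapMatrix ℝ + 2)⁻¹) (Ldag - (G.lapMatrix ℝ + 2)⁻¹)
        (Ldag - (G.lapMatrix ℝ + 2)⁻¹) (Ldag + (G.lapMatrix ℝ + 2)⁻¹)) *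
        (Matrix.of fun _ _ : V ⊕ V => (1 : ℝ)) = 0 :=
  bunkbed_lap_pseudoinverse_general G Ldag hsym h₁ h₂ h₃
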